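/- Let (Γ, 𝔞, θ, δ, f) be a Γ-Lie bialgebra and let A = U(𝔞) ⋊ Γ. Define δ_A on generators by δ_A([x]) = [δ(x)] for x ∈ 𝔞 and δ_A([γ]) = −[f_γ]·([γ] ⊗ [γ]) for γ ∈ Γ. Then δ_A([γγ']) computed from the multiplicativity requirement δ_A(ab) = δ_A(a)·Δ(b) + Δ(a)·δ_A(b) is consistent: δ_A([γ])·Δ([γ']) + Δ([γ])·δ_A([γ']) = −[f_{γγ'}]·([γγ'] ⊗ [γγ']), using the cocycle identity f_{γγ'} = f_γ + Λ²(θ_γ)(f_{γ'}). -/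

import Mathlib

open TensorProduct

attribute [local instance 100] LieRing.ofAssociativeRing

/-- A bialgebra structure on a `k`-module `A`, given by explicit structure maps:
an associative unital product, a coassociative counital coproduct which is an
algebra morphism. -/
structure BialgStr (k : Type) [CommRing k] (A : Type) [AddCommGroup A] [Module k A] where
  mul : A →ₗ[k] A →ₗ[k] A
  one : A
  comul : A →ₗ[k] A ⊗[k] A
  counit : A →ₗ[k] k
  mul_assoc' : ∀ x y z : A, mul (mul x y) z = mul x (mul y z)
  one_mul' : ∀ x : A, mul one x = x
  mul_one' : ∀ x : A, mul x one = x
  coassoc' : ∀ x : A, (TensorProduct.assoc k A A A)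
      ((TensorProduct.map comul LinearMap.id) (comul x)) =
    (TensorProduct.map LinearMap.id comul) (comul x)
  counit_left' : ∀ x : A,
    (TensorProduct.lid k A) ((TensorProduct.map counit LinearMap.id) (comul x)) = x
  counit_right' : ∀ x : A,
    (TensorProduct.rid k A) ((TensorProduct.map LinearMap.id counit) (comul x)) = x
  comul_mul' : ∀ x y : A, comul (mul x y) = TensorProduct.map₂ mul mul (comul x) (comul y)
  comul_one' : comul one = one ⊗ₜ one
  counit_mul' : ∀ x y : A, counit (mul x y) = counit x * counit y
  counit_one' : counit one = 1

/-- The linear embedding `U(a) → U(a) ⊗ kΓ`, `u ↦ u ⊗ single γ 1`, whose range is the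
`γ`-component of the `Γ`-grading. -/
noncomputable def jR (k : Type) [Field k] (a : Type) [LieRing a] [LieAlgebra k a]
    (Γ : Type) [Group Γ] (γ : Γ) :
    UniversalEnvelopingAlgebra k a →ₗ[k]
      (UniversalEnvelopingAlgebra k a) ⊗[k] (MonoidAlgebra k Γ) :=
  (TensorProduct.mk k (UniversalEnvelopingAlgebra k a) (MonoidAlgebra k Γ)).flip
    (MonoidAlgebra.single γ 1)

/-- The canonical map `x ↦ [x] = ι(x) ⊗ 1` from `a` to `U(a) ⊗ kΓ`. -/
noncomputable def jx (k : Type) [Field k] (a : Type) [LieRing a] [LieAlgebra k a]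
    (Γ : Type) [Group Γ] :
    a →ₗ[k] (UniversalEnvelopingAlgebra k a) ⊗[k] (MonoidAlgebra k Γ) :=
  (jR k a Γ 1) ∘ₗ (UniversalEnvelopingAlgebra.ι k (L := a)).toLinearMap

/-- The extension of a Lie algebra automorphism of `a` to an algebra endomorphism of `U(a)`. -/
noncomputable def extendAut (k : Type) [Field k] (a : Type) [LieRing a] [LieAlgebra k a]
    (θ : a ≃ₗ⁅k⁆ a) :
    UniversalEnvelopingAlgebra k a →ₐ[k] UniversalEnvelopingAlgebra k a :=
  UniversalEnvelopingAlgebra.lift k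
    ((UniversalEnvelopingAlgebra.ι k (L := a)).comp θ.toLieHom)

/-- `δ_A([γ]) = −[f_γ]·([γ] ⊗ [γ])` in `A ⊗ A`, where `A = U(a) ⋊ Γ` and
`[w]` for `w ∈ Λ²a` denotes its image in `A ⊗ A`. -/
noncomputable def deltaA (k : Type) [Field k] (a : Type) [LieRing a] [LieAlgebra k a]
    (Γ : Type) [Group Γ]
    (B : BialgStr k ((UniversalEnvelopingAlgebra k a) ⊗[k] (MonoidAlgebra k Γ)))
    (f : Γ → a ⊗[k] a) (γ : Γ) :
    ((UniversalEnvelopingAlgebra k a) ⊗[k] (MonoidAlgebra k Γ)) ⊗[k]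
      ((UniversalEnvelopingAlgebra k a) ⊗[k] (MonoidAlgebra k Γ)) :=
  -(TensorProduct.map₂ B.mul B.mul
      ((TensorProduct.map (jx k a Γ) (jx k a Γ)) (f γ))
      ((jR k a Γ γ 1) ⊗ₜ (jR k a Γ γ 1)))

/-!
Both products are computed on pure tensors `x ⊗ y` of `Λ²𝔞` using only the smash product
rule: right multiplication by `[γ'] ⊗ [γ']` just moves `[f_γ]·([γ] ⊗ [γ])` to the
component `γγ'`, while left multiplication by `[γ] ⊗ [γ]` commutes `[γ]` past `[x] ⊗ [y]`
at the cost of twisting it by `θ_γ ⊗ θ_γ`. The sum is therefore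
`−[f_γ + (θ_γ ⊗ θ_γ)(f_{γ'})]·([γγ'] ⊗ [γγ'])`, which is `δ_A([γγ'])` by the cocycle identity.
-/

open UniversalEnvelopingAlgebra

section SmashProduct

variable {k : Type} [Field k] {a : Type} [LieRing a] [LieAlgebra k a] {Γ : Type} [Group Γ]

structure IsSmashProductMul (θ : Γ → (a ≃ₗ⁅k⁆ a))
    (B : BialgStr k (UniversalEnvelopingAlgebra k a ⊗[k] MonoidAlgebra k Γ)) : Prop where
  jR_mul_jR : ∀ (u u' : UniversalEnvelopingAlgebra k a) (γ γ' : Γ),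
      B.mul (jR k a Γ γ u) (jR k a Γ γ' u') = jR k a Γ (γ * γ') (u * extendAut k a (θ γ) u')

theorem extendAut_ι (θ : a ≃ₗ⁅k⁆ a) (x : a) :
    extendAut k a θ (ι k x) = ι k (θ x) :=
  lift_ι_apply k ((ι k).comp θ.toLieHom) x

variable {θ : Γ → (a ≃ₗ⁅k⁆ a)}
  {B : BialgStr k (UniversalEnvelopingAlgebra k a ⊗[k] MonoidAlgebra k Γ)}

theorem IsSmashProductMul.jR_mul_jR_one (hB : IsSmashProductMul θ B)
    (u : UniversalEnvelopingAlgebra k a) (γ γ' : Γ) :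
    B.mul (jR k a Γ γ u) (jR k a Γ γ' 1) = jR k a Γ (γ * γ') u := by
  rw [hB.jR_mul_jR, map_one, mul_one]

theorem IsSmashProductMul.jx_mul_jR_one (hB : IsSmashProductMul θ B) (x : a) (γ : Γ) :
    B.mul (jx k a Γ x) (jR k a Γ γ 1) = jR k a Γ γ (ι k x) :=
  (hB.jR_mul_jR_one (ι k x) 1 γ).trans (by rw [one_mul])

theorem IsSmashProductMul.jR_one_mul_jR_ι (hB : IsSmashProductMul θ B) (x : a) (γ γ' : Γ) :
    B.mul (jR k a Γ γ 1) (jR k a Γ γ' (ι k x)) = jR k a Γ (γ * γ') (ι k (θ γ x)) := by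
  rw [hB.jR_mul_jR, one_mul, extendAut_ι]

theorem IsSmashProductMul.map₂_mul_groupLike_right (hB : IsSmashProductMul θ B)
    (t : a ⊗[k] a) (γ γ' : Γ) :
    map₂ B.mul B.mul
        (map₂ B.mul B.mul (map (jx k a Γ) (jx k a Γ) t) (jR k a Γ γ 1 ⊗ₜ[k] jR k a Γ γ 1))
        (jR k a Γ γ' 1 ⊗ₜ[k] jR k a Γ γ' 1) =
      map₂ B.mul B.mul (map (jx k a Γ) (jx k a Γ) t)
        (jR k a Γ (γ * γ') 1 ⊗ₜ[k] jR k a Γ (γ * γ') 1) := by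
  induction t using TensorProduct.induction_on with
  | zero => simp only [map_zero, LinearMap.zero_apply]
  | tmul x y => simp only [map_tmul, map₂_apply_tmul, hB.jx_mul_jR_one, hB.jR_mul_jR_one]
  | add s t hs ht => simp only [map_add, LinearMap.add_apply, hs, ht]

theorem IsSmashProductMul.map₂_mul_groupLike_left (hB : IsSmashProductMul θ B)
    (t : a ⊗[k] a) (γ γ' : Γ) :
    map₂ B.mul B.mul (jR k a Γ γ 1 ⊗ₜ[k] jR k a Γ γ 1)
        (map₂ B.mul B.mul (map (jx k a Γ) (jx k a Γ) t) (jR k a Γ γ' 1 ⊗ₜ[k] jR k a Γ γ' 1)) =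
      map₂ B.mul B.mul
        (map (jx k a Γ) (jx k a Γ)
          (map (θ γ).toLieHom.toLinearMap (θ γ).toLieHom.toLinearMap t))
        (jR k a Γ (γ * γ') 1 ⊗ₜ[k] jR k a Γ (γ * γ') 1) := by
  induction t using TensorProduct.induction_on with
  | zero => simp only [map_zero, LinearMap.zero_apply]
  | tmul x y =>
    simp only [map_tmul, map₂_apply_tmul, hB.jx_mul_jR_one, hB.jR_one_mul_jR_ι,
      LieHom.coe_toLinearMap, LieEquiv.coe_toLieHom]
  | add s t hs ht => simp only [map_add, LinearMap.add_apply, hs, ht]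

end SmashProduct

theorem coPoisson_consistency_on_group_elements_general
    (k : Type) [Field k] (a : Type) [LieRing a] [LieAlgebra k a]
    (Γ : Type) [Group Γ]
    (θ : Γ → (a ≃ₗ⁅k⁆ a))
    (f : Γ → a ⊗[k] a)
    (hcoc : ∀ γ γ' : Γ, f (γ * γ') = f γ +
      TensorProduct.map (θ γ).toLieHom.toLinearMap (θ γ).toLieHom.toLinearMap (f γ'))
    (B : BialgStr k ((UniversalEnvelopingAlgebra k a) ⊗[k] (MonoidAlgebra k Γ)))
    (hmul : ∀ (u u' : UniversalEnvelopingAlgebra k a) (γ γ' : Γ),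
      B.mul (jR k a Γ γ u) (jR k a Γ γ' u') = jR k a Γ (γ * γ') (u * extendAut k a (θ γ) u')) :
    ∀ γ γ' : Γ,
      TensorProduct.map₂ B.mul B.mul (deltaA k a Γ B f γ) ((jR k a Γ γ' 1) ⊗ₜ (jR k a Γ γ' 1)) +
        TensorProduct.map₂ B.mul B.mul ((jR k a Γ γ 1) ⊗ₜ (jR k a Γ γ 1))
          (deltaA k a Γ B f γ') =
      deltaA k a Γ B f (γ * γ') := by
  intro γ γ'
  have hB : IsSmashProductMul θ B := ⟨hmul⟩
  simp only [deltaA, map_neg, LinearMap.neg_apply, hB.map₂_mul_groupLike_right,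
    hB.map₂_mul_groupLike_left, hcoc, map_add, LinearMap.add_apply, neg_add]

/-- consistency of the co-Poisson structure on `U(a) ⋊ Γ` on group elements:
`δ_A([γ])·Δ([γ']) + Δ([γ])·δ_A([γ']) = −[f_{γγ'}]·([γγ'] ⊗ [γγ'])`, using the cocycle
identity `f_{γγ'} = f_γ + Λ²(θ_γ)(f_{γ'})`. -/
theorem coPoisson_consistency_on_group_elements
    (k : Type) [Field k] [CharZero k] (a : Type) [LieRing a] [LieAlgebra k a]
    (Γ : Type) [Group Γ]
    (θ : Γ → (a ≃ₗ⁅k⁆ a)) (hθ : ∀ γ γ' : Γ, ∀ x : a, θ (γ * γ') x = θ γ (θ γ' x))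
    (f : Γ → a ⊗[k] a)
    (hcoc : ∀ γ γ' : Γ, f (γ * γ') = f γ +
      TensorProduct.map (θ γ).toLieHom.toLinearMap (θ γ).toLieHom.toLinearMap (f γ'))
    (B : BialgStr k ((UniversalEnvelopingAlgebra k a) ⊗[k] (MonoidAlgebra k Γ)))
    (hmul : ∀ (u u' : UniversalEnvelopingAlgebra k a) (γ γ' : Γ),
      B.mul (jR k a Γ γ u) (jR k a Γ γ' u') = jR k a Γ (γ * γ') (u * extendAut k a (θ γ) u')) :
    ∀ γ γ' : Γ,
      TensorProduct.map₂ B.mul B.mul (deltaA k a Γ B f γ) ((jR k a Γ γ' 1) ⊗ₜ (jR k a Γ γ' 1)) +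
        TensorProduct.map₂ B.mul B.mul ((jR k a Γ γ 1) ⊗ₜ (jR k a Γ γ 1))
          (deltaA k a Γ B f γ') =
      deltaA k a Γ B f (γ * γ') :=
  coPoisson_consistency_on_group_elements_general k a Γ θ f hcoc B hmul
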